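/- For every integer k ≥ 3, there exists a connected interval graph G with a dominating path (so pe(G) ≤ 1) such that every longest path P of G satisfies ecc_G(P) = k - 1. In particular, longest paths in interval graphs need not be central paths. -/

import Mathlib

open SimpleGraph

variable {V : Type*} [Fintype V] [DecidableEq V]

/-- Distance from a vertex `u` to the vertex set of a walk `P`. -/
noncomputable def walkDist (G : SimpleGraph V) {a b : V} (P : G.Walk a b) (u : V) : ℕ :=
  P.support.toFinset.inf' ⟨a, List.mem_toFinset.mpr P.start_mem_support⟩ (fun x => G.dist u x)

/-- Eccentricity of a walk: max distance from any vertex of `G` to the walk. -/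
noncomputable def eccW (G : SimpleGraph V) {a b : V} (P : G.Walk a b) : ℕ :=
  Finset.univ.sup (walkDist G P)

/-- Path eccentricity of a graph. -/
noncomputable def pe (G : SimpleGraph V) : ℕ :=
  sInf {m | ∃ (a b : V) (P : G.Walk a b), P.IsPath ∧ eccW G P = m}

/-- `P` is a longest path in `G`. -/
def IsLongestPath (G : SimpleGraph V) {a b : V} (P : G.Walk a b) : Prop :=
  P.IsPath ∧ ∀ (c d : V) (Q : G.Walk c d), Q.IsPath → Q.length ≤ P.length

/-- `G` is `k`-connected. -/
def KConnected (k : ℕ) (G : SimpleGraph V) : Prop :=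
  k + 1 ≤ Fintype.card V ∧
    ∀ S : Finset V, S.card < k → (G.induce ((↑S : Set V)ᶜ)).Connected

/-- `G` is an interval graph: vertices can be represented by closed real intervals
so that distinct vertices are adjacent iff their intervals intersect. -/
def IsIntervalGraph {W : Type*} (G : SimpleGraph W) : Prop :=
  ∃ lo hi : W → ℝ, ∀ u v : W,
    G.Adj u v ↔ u ≠ v ∧ (Set.Icc (lo u) (hi u) ∩ Set.Icc (lo v) (hi v)).Nonempty

/-! The graph is the path `0 — 1 — ⋯ — (2k-1)` together with a clique on `k` further vertices
all joined to `k`; as intervals, vertex `i` of the path is `[2i, 2i+2]` and every clique vertex is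
the point `2k+1`. The path dominates the graph. The vertex `k` cuts the graph into the parts
`{0, …, k-1}`, `{k+1, …, 2k-1}` and the clique, of sizes `k`, `k-1` and `k`, and a path passes
through `k` at most once, so it meets at most two of them. Hence a longest path has `2k+1`
vertices, consists exactly of `k`, the first part and the clique, and misses the vertex `2k-1`,
which is at distance `k-1` from it. -/

open Finset

namespace SimpleGraph.Walk

variable {V : Type*} {G : SimpleGraph V} {u v : V}

theorem IsPath.ncard_neighborSet_toSubgraph_le_two {p : G.Walk u v} (hp : p.IsPath) (w : V) :
    (p.toSubgraph.neighborSet w).ncard ≤ 2 := by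
  by_cases hw : w ∈ p.support
  · obtain ⟨i, rfl, hi⟩ := p.mem_support_iff_exists_getVert.mp hw
    by_cases hnil : p.Nil
    · have hempty : p.toSubgraph.neighborSet (p.getVert i) = ∅ :=
        Set.eq_empty_of_forall_notMem fun x hx => by
          obtain ⟨j, -, hj⟩ := (toSubgraph_adj_iff p).mp hx
          rw [length_eq_zero_iff.mpr hnil] at hj
          omega
      simp [hempty]
    rcases Nat.eq_zero_or_pos i with rfl | hi0
    · simp [hp.neighborSet_toSubgraph_startpoint hnil]
    rcases hi.eq_or_lt with rfl | hlt
    · simp [hp.neighborSet_toSubgraph_endpoint hnil]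
    · rw [hp.ncard_neighborSet_toSubgraph_internal_eq_two hi0.ne' hlt]
  · have hempty : p.toSubgraph.neighborSet w = ∅ :=
      Set.eq_empty_of_forall_notMem fun x hx => hw (mem_support_of_adj_toSubgraph hx)
    simp [hempty]

theorem exists_toSubgraph_adj_of_separates (p : G.Walk u v) {S : Set V} {c x y : V}
    (hS : ∀ a b, G.Adj a b → a ∈ S → b ∉ S → b = c)
    (hx : x ∈ p.support) (hy : y ∈ p.support) (hxS : x ∈ S) (hyS : y ∉ S) :
    ∃ a ∈ S, p.toSubgraph.Adj c a := by
  classical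
  have hadj : ∀ {z} (hz : z ∈ p.support) {d}, d ∈ (p.takeUntil z hz).darts →
      p.toSubgraph.Adj d.fst d.snd := fun hz d hd =>
    adj_toSubgraph_iff_mem_edges.mpr (List.mem_map_of_mem (p.darts_takeUntil_subset_darts hz hd))
  by_cases hu : u ∈ S
  · obtain ⟨d, hd, hfst, hsnd⟩ := (p.takeUntil y hy).exists_boundary_dart S hu hyS
    refine ⟨d.fst, hfst, ?_⟩
    rw [← hS _ _ d.adj hfst hsnd]
    exact (hadj hy hd).symm
  · obtain ⟨d, hd, hfst, hsnd⟩ := (p.takeUntil x hx).exists_boundary_dart Sᶜ hu (by simpa)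
    have hsnd : d.snd ∈ S := by simpa using hsnd
    refine ⟨d.snd, hsnd, ?_⟩
    rw [← hS _ _ d.adj.symm hsnd hfst]
    exact hadj hx hd

theorem exists_isPath_ofFn {n : ℕ} (f : Fin (n + 1) → V) (hf : Function.Injective f)
    (hadj : ∀ i : Fin n, G.Adj (f i.castSucc) (f i.succ)) :
    ∃ p : G.Walk (f 0) (f (Fin.last n)), p.IsPath ∧ p.length = n ∧
      ∀ w, w ∈ p.support ↔ w ∈ Set.range f := by
  have hne : List.ofFn f ≠ [] := by simp
  have hchain : (List.ofFn f).IsChain G.Adj :=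
    List.isChain_ofFn.mpr fun i hi => hadj ⟨i, by omega⟩
  have hhead : (List.ofFn f).head hne = f 0 := List.head_ofFn hne
  have hlast : (List.ofFn f).getLast hne = f (Fin.last n) := List.getLast_ofFn hne
  refine ⟨(ofSupport _ hne hchain).copy hhead hlast, ?_, ?_, ?_⟩
  · exact IsPath.mk' (by rw [support_copy, support_ofSupport]; exact List.nodup_ofFn.mpr hf)
  · rw [length_copy, length_ofSupport, List.length_ofFn]; rfl
  · simp only [support_copy, support_ofSupport, List.mem_ofFn, Set.mem_range, implies_true]

theorem apply_le_apply_add_length {φ : V → ℕ} (hφ : ∀ x y, G.Adj x y → φ x ≤ φ y + 1)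
    (p : G.Walk u v) :
    φ u ≤ φ v + p.length := by
  induction p with
  | nil => simp
  | cons h q ih => have := hφ _ _ h; rw [length_cons]; omega

theorem connected_of_forall_exists_eq_or_adj (p : G.Walk u v)
    (h : ∀ w, ∃ x ∈ p.support, w = x ∨ G.Adj w x) : G.Connected := by
  classical
  refine (connected_iff_exists_forall_reachable G).2 ⟨u, fun w => ?_⟩
  obtain ⟨x, hx, rfl | hadj⟩ := h w
  · exact ⟨p.takeUntil _ hx⟩
  · exact ⟨(p.takeUntil x hx).concat hadj.symm⟩

end SimpleGraph.Walk

section PathEccentricity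

variable {V : Type*} [DecidableEq V] {G : SimpleGraph V} {a b : V} (P : G.Walk a b)

theorem walkDist_le_dist {x : V} (hx : x ∈ P.support) (u : V) : walkDist G P u ≤ G.dist u x :=
  Finset.inf'_le _ (List.mem_toFinset.mpr hx)

theorem le_walkDist {m : ℕ} {u : V} (h : ∀ x ∈ P.support, m ≤ G.dist u x) :
    m ≤ walkDist G P u :=
  Finset.le_inf' _ _ fun x hx => h x (List.mem_toFinset.mp hx)

theorem walkDist_le_one {u : V} (h : ∃ x ∈ P.support, u = x ∨ G.Adj u x) :
    walkDist G P u ≤ 1 := by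
  obtain ⟨x, hx, rfl | hadj⟩ := h
  · exact (walkDist_le_dist P hx u).trans (by simp)
  · simpa [dist_eq_one_iff_adj.mpr hadj] using walkDist_le_dist P hx u

theorem pe_le_eccW [Fintype V] (hP : P.IsPath) : pe G ≤ eccW G P :=
  Nat.sInf_le ⟨a, b, P, hP, rfl⟩

end PathEccentricity

def intervalGraph {W : Type*} (lo hi : W → ℕ) : SimpleGraph W where
  Adj u v := u ≠ v ∧ max (lo u) (lo v) ≤ min (hi u) (hi v)
  symm := ⟨fun u v h => ⟨h.1.symm, by rw [max_comm, min_comm]; exact h.2⟩⟩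
  loopless := ⟨fun _ h => h.1 rfl⟩

theorem intervalGraph_adj {W : Type*} {lo hi : W → ℕ} {u v : W} :
    (intervalGraph lo hi).Adj u v ↔ u ≠ v ∧ max (lo u) (lo v) ≤ min (hi u) (hi v) :=
  Iff.rfl

theorem isIntervalGraph_intervalGraph {W : Type*} (lo hi : W → ℕ) :
    IsIntervalGraph (intervalGraph lo hi) :=
  ⟨(lo ·), (hi ·), fun u v => by
    rw [intervalGraph_adj, Set.Icc_inter_Icc, Set.nonempty_Icc, ← Nat.cast_max, ← Nat.cast_min,
      Nat.cast_le]⟩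

def pendantCliqueGraph (k : ℕ) : SimpleGraph (Fin (3 * k)) :=
  intervalGraph (fun v => if (v : ℕ) < 2 * k then 2 * v else 2 * k + 1)
    (fun v => if (v : ℕ) < 2 * k then 2 * v + 2 else 2 * k + 1)

namespace pendantCliqueGraph

variable {k : ℕ}

theorem adj_iff {u v : Fin (3 * k)} :
    (pendantCliqueGraph k).Adj u v ↔ u ≠ v ∧
      ((u : ℕ) < 2 * k ∧ (v : ℕ) < 2 * k ∧ ((u : ℕ) + 1 = v ∨ (v : ℕ) + 1 = u) ∨
        ((u : ℕ) = k ∨ 2 * k ≤ u) ∧ ((v : ℕ) = k ∨ 2 * k ≤ v)) := by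
  rw [pendantCliqueGraph, intervalGraph_adj, and_congr_right_iff]
  intro huv
  have : (u : ℕ) ≠ v := Fin.val_ne_of_ne huv
  split_ifs <;> omega

variable (k) [NeZero k]

def hub : Fin (3 * k) := ⟨k, by have := NeZero.pos k; omega⟩

theorem exists_isPath_dominating :
    ∃ (a b : Fin (3 * k)) (P : (pendantCliqueGraph k).Walk a b), P.IsPath ∧
      ∀ w, ∃ x ∈ P.support, w = x ∨ (pendantCliqueGraph k).Adj w x := by
  have := NeZero.pos k
  obtain ⟨P, hP, -, hsupp⟩ := Walk.exists_isPath_ofFn (G := pendantCliqueGraph k)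
    (n := 2 * k - 1) (fun i => ⟨i, by omega⟩)
    (fun i j h => by simpa only [Fin.ext_iff] using h)
    (fun i => by
      rw [adj_iff]
      simp only [Fin.val_castSucc, Fin.val_succ, ne_eq, Fin.ext_iff, true_or, and_true]
      omega)
  refine ⟨_, _, P, hP, fun w => ?_⟩
  by_cases hw : (w : ℕ) < 2 * k
  · exact ⟨w, (hsupp w).mpr ⟨⟨w, by omega⟩, rfl⟩, Or.inl rfl⟩
  · refine ⟨hub k, (hsupp _).mpr ⟨⟨k, by omega⟩, rfl⟩, Or.inr ?_⟩
    rw [adj_iff, hub]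
    simp only [ne_eq, Fin.ext_iff, true_or, and_true]
    omega

theorem connected : (pendantCliqueGraph k).Connected :=
  have ⟨_, _, P, _, hP⟩ := exists_isPath_dominating k
  P.connected_of_forall_exists_eq_or_adj hP

theorem exists_isPath_length_eq :
    ∃ (a b : Fin (3 * k)) (P : (pendantCliqueGraph k).Walk a b),
      P.IsPath ∧ P.length = 2 * k := by
  have := NeZero.pos k
  obtain ⟨P, hP, hlen, -⟩ := Walk.exists_isPath_ofFn (G := pendantCliqueGraph k) (n := 2 * k)
    (fun i => ⟨if (i : ℕ) ≤ k then i else i + k - 1, by split_ifs <;> omega⟩)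
    (fun i j h => by simp only [Fin.mk.injEq] at h; ext; split_ifs at h <;> omega)
    (fun i => by
      rw [adj_iff]
      simp only [Fin.val_castSucc, Fin.val_succ, ne_eq, Fin.ext_iff]
      split_ifs <;> omega)
  exact ⟨_, _, P, hP, hlen⟩

theorem dist_hub_le {u : Fin (3 * k)} (hku : k ≤ (u : ℕ)) (hu : (u : ℕ) < 2 * k) :
    (pendantCliqueGraph k).dist u (hub k) ≤ u - k := by
  obtain ⟨P, -, hlen, -⟩ := Walk.exists_isPath_ofFn (G := pendantCliqueGraph k)
    (n := u - k) (fun i => ⟨k + i, by omega⟩)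
    (fun i j h => by simpa only [Fin.ext_iff, Nat.add_left_cancel_iff] using h)
    (fun i => by
      rw [adj_iff]
      simp only [Fin.val_castSucc, Fin.val_succ, ne_eq, Fin.ext_iff]
      omega)
  have hstart : (⟨k + (0 : Fin (u - k + 1)), by omega⟩ : Fin (3 * k)) = hub k := by
    ext; simp [hub]
  have hend : (⟨k + Fin.last (u - k), by simp only [Fin.val_last]; omega⟩ : Fin (3 * k)) = u :=
    Fin.ext (by simp only [Fin.val_last]; omega)
  have h := dist_le P
  rw [hlen, hstart, hend, dist_comm] at h
  exact h

theorem sub_le_dist {u v : Fin (3 * k)} (hu : (u : ℕ) < 2 * k)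
    (hv : (v : ℕ) ≤ k ∨ 2 * k ≤ v) :
    u - k ≤ (pendantCliqueGraph k).dist u v := by
  obtain ⟨p, hp⟩ := ((connected k).preconnected u v).exists_walk_length_eq_dist
  have := p.apply_le_apply_add_length
    (φ := fun w : Fin (3 * k) => if (w : ℕ) < 2 * k then w - k else 0)
    (fun x y hxy => by rw [adj_iff] at hxy; split_ifs <;> omega)
  simp only [hu, if_true] at this
  split_ifs at this <;> omega

theorem hub_separates {S : Set (Fin (3 * k))}
    (hS : S = {v : Fin (3 * k) | v < k} ∨ S = {v : Fin (3 * k) | k < v ∧ v < 2 * k} ∨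
      S = {v : Fin (3 * k) | 2 * k ≤ v})
    (a b : Fin (3 * k)) (hab : (pendantCliqueGraph k).Adj a b) (ha : a ∈ S) (hb : b ∉ S) :
    b = hub k := by
  rw [adj_iff] at hab
  have hab' : (a : ℕ) ≠ b := Fin.val_ne_of_ne hab.1
  ext
  rcases hS with rfl | rfl | rfl <;> simp only [Set.mem_ofPred_eq] at ha hb <;> simp only [hub] <;>
    omega

theorem le_or_le_of_mem_support {a b : Fin (3 * k)} {P : (pendantCliqueGraph k).Walk a b}
    (hP : P.IsPath) {x z : Fin (3 * k)} (hx : x ∈ P.support) (hxk : (x : ℕ) < k)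
    (hz : z ∈ P.support) (hzk : 2 * k ≤ (z : ℕ)) (v : Fin (3 * k)) (hv : v ∈ P.support) :
    (v : ℕ) ≤ k ∨ 2 * k ≤ v := by
  by_contra! hvk
  obtain ⟨l, hlS, hl⟩ := P.exists_toSubgraph_adj_of_separates
    (hub_separates k (Or.inl rfl)) hx hv hxk (by simp only [Set.mem_ofPred_eq]; omega)
  obtain ⟨m, hmS, hm⟩ := P.exists_toSubgraph_adj_of_separates
    (hub_separates k (Or.inr (Or.inl rfl))) hv hx hvk (by simp only [Set.mem_ofPred_eq]; omega)
  obtain ⟨r, hrS, hr⟩ := P.exists_toSubgraph_adj_of_separates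
    (hub_separates k (Or.inr (Or.inr rfl))) hz hv hzk (by simp only [Set.mem_ofPred_eq]; omega)
  simp only [Set.mem_ofPred_eq] at hlS hmS hrS
  have hthree : ({l, m, r} : Set (Fin (3 * k))).ncard = 3 :=
    Set.ncard_eq_three.mpr ⟨l, m, r, Fin.ne_of_val_ne (by omega), Fin.ne_of_val_ne (by omega),
      Fin.ne_of_val_ne (by omega), rfl⟩
  have hsub : {l, m, r} ⊆ P.toSubgraph.neighborSet (hub k) := by
    rintro w (rfl | rfl | rfl) <;> assumption
  have := Set.ncard_le_ncard hsub (P.finite_neighborSet_toSubgraph)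
  have := hP.ncard_neighborSet_toSubgraph_le_two (hub k)
  omega

theorem mem_support_iff_of_le_length {a b : Fin (3 * k)} {P : (pendantCliqueGraph k).Walk a b}
    (hP : P.IsPath) (hlen : 2 * k ≤ P.length) (v : Fin (3 * k)) :
    v ∈ P.support ↔ (v : ℕ) ≤ k ∨ 2 * k ≤ v := by
  have hcard : 2 * k + 1 ≤ #P.support.toFinset := by
    rw [List.toFinset_card_of_nodup hP.support_nodup, Walk.length_support]
    omega
  have hbound {s : Finset (Fin (3 * k))} {t : Finset ℕ} (hst : ∀ v ∈ s, (v : ℕ) ∈ t) :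
      #s ≤ #t :=
    Finset.card_le_card_of_injOn Fin.val hst Fin.val_injective.injOn
  have hleft : ∃ x ∈ P.support, (x : ℕ) < k := by
    by_contra! h
    have := hbound (t := Finset.Ico k (3 * k)) fun v hv =>
      Finset.mem_Ico.mpr ⟨h v (List.mem_toFinset.mp hv), v.isLt⟩
    rw [Nat.card_Ico] at this
    omega
  have hright : ∃ z ∈ P.support, 2 * k ≤ (z : ℕ) := by
    by_contra! h
    have := hbound (t := Finset.range (2 * k)) fun v hv =>
      Finset.mem_range.mpr (h v (List.mem_toFinset.mp hv))
    rw [Finset.card_range] at this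
    omega
  obtain ⟨x, hx, hxk⟩ := hleft
  obtain ⟨z, hz, hzk⟩ := hright
  have hsub : P.support.toFinset ⊆ ({v | (v : ℕ) ≤ k ∨ 2 * k ≤ v} : Finset (Fin (3 * k))) :=
    fun v hv => by
      simpa using le_or_le_of_mem_support k hP hx hxk hz hzk v (List.mem_toFinset.mp hv)
  have hT : #({v | (v : ℕ) ≤ k ∨ 2 * k ≤ v} : Finset (Fin (3 * k))) ≤ 2 * k + 1 := by
    refine (hbound (t := Finset.range (k + 1) ∪ Finset.Ico (2 * k) (3 * k)) fun v hv => ?_).trans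
      ((Finset.card_union_le _ _).trans ?_)
    · simp only [Finset.mem_filter, Finset.mem_univ, true_and] at hv
      simp only [Finset.mem_union, Finset.mem_range, Finset.mem_Ico]
      omega
    · rw [Finset.card_range, Nat.card_Ico]
      omega
  have heq := Finset.eq_of_subset_of_card_le hsub (hT.trans hcard)
  rw [← List.mem_toFinset, heq]
  simp

theorem eccW_eq_of_le_length {a b : Fin (3 * k)} {P : (pendantCliqueGraph k).Walk a b}
    (hP : P.IsPath) (hlen : 2 * k ≤ P.length) : eccW (pendantCliqueGraph k) P = k - 1 := by
  have := NeZero.pos k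
  have hsupp := mem_support_iff_of_le_length k hP hlen
  apply le_antisymm
  · refine Finset.sup_le fun u _ => ?_
    by_cases hu : (u : ℕ) ≤ k ∨ 2 * k ≤ u
    · exact (walkDist_le_dist P ((hsupp u).mpr hu) u).trans (by simp)
    · refine (walkDist_le_dist P ((hsupp (hub k)).mpr (Or.inl le_rfl)) u).trans ?_
      exact (dist_hub_le k (by omega) (by omega)).trans (by omega)
  · refine (le_walkDist P fun x hx => ?_).trans
      (Finset.le_sup (Finset.mem_univ ⟨2 * k - 1, by omega⟩))
    have h := sub_le_dist k (u := ⟨2 * k - 1, by omega⟩) (by dsimp only; omega)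
      ((hsupp x).mp hx)
    dsimp only at h
    omega

end pendantCliqueGraph

theorem stmt13 (k : ℕ) (hk : 3 ≤ k) :
    ∃ (n : ℕ) (G : SimpleGraph (Fin n)),
      IsIntervalGraph G ∧ G.Connected ∧
      (∃ (a b : Fin n) (P : G.Walk a b), P.IsPath ∧ ∀ u, walkDist G P u ≤ 1) ∧
      pe G ≤ 1 ∧
      ∀ (a b : Fin n) (P : G.Walk a b), IsLongestPath G P → eccW G P = k - 1 := by
  have : NeZero k := ⟨by omega⟩
  obtain ⟨a, b, P, hP, hdom⟩ := pendantCliqueGraph.exists_isPath_dominating k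
  have hP₁ : ∀ u, walkDist (pendantCliqueGraph k) P u ≤ 1 := fun u =>
    walkDist_le_one P (hdom u)
  obtain ⟨c, d, Q, hQ, hQlen⟩ := pendantCliqueGraph.exists_isPath_length_eq k
  refine ⟨3 * k, pendantCliqueGraph k, isIntervalGraph_intervalGraph _ _,
    pendantCliqueGraph.connected k, ⟨a, b, P, hP, hP₁⟩,
    (pe_le_eccW P hP).trans (Finset.sup_le fun u _ => hP₁ u), fun a b R hR => ?_⟩
  exact pendantCliqueGraph.eccW_eq_of_le_length k hR.1 (hQlen ▸ hR.2 c d Q hQ)
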